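/- Let (D1, M) be a consistent periodic first-derivative SBP operator (M symmetric positive definite, M·D1 + D1ᵀ·M = 0, D1·𝟙 = 0) and D2 a consistent periodic second-derivative SBP operator with the same mass matrix M (M·D2 = −A2, A2 symmetric positive semidefinite, D2·𝟙 = 0). Let u : ℝ → ℝ^m be differentiable and satisfy the semidiscretization of the linear dispersive equation, ∂ₜu = −(I − D2)⁻¹·D1·u, for all t. Then the discrete total mass 𝟙ᵀ·M·u(t) is constant in t. -/

import Mathlib

open Matrix

/-!
Differentiating, `d/dt 𝟙ᵀ M u = −𝟙ᵀ M (I − D2)⁻¹ D1 u`. Since `M (I − D2) = M + A2` is symmetric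
and `(I − D2) 𝟙 = 𝟙`, the covector `𝟙ᵀ M` is invariant under right multiplication by `I − D2`,
hence by its inverse, and the derivative becomes `−𝟙ᵀ M D1 u = 𝟙ᵀ D1ᵀ M u = (D1 𝟙)ᵀ M u = 0`.
-/

namespace Matrix

variable {n R : Type*} [Fintype n] [CommRing R]

theorem dotProduct_mulVec_of_transpose_eq {S : Matrix n n R} (hS : Sᵀ = S) (c w : n → R) :
    c ⬝ᵥ (S *ᵥ w) = (S *ᵥ c) ⬝ᵥ w := by
  rw [dotProduct_mulVec, ← mulVec_transpose, hS]

theorem dotProduct_mulVec_mulVec_eq_zero_of_skew {M D : Matrix n n R}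
    (hskew : M * D + Dᵀ * M = 0) {c : n → R} (hc : D *ᵥ c = 0) (x : n → R) :
    c ⬝ᵥ (M *ᵥ (D *ᵥ x)) = 0 := by
  rw [mulVec_mulVec, eq_neg_of_add_eq_zero_left hskew, neg_mulVec, dotProduct_neg,
    ← mulVec_mulVec, dotProduct_mulVec, vecMul_transpose, hc, zero_dotProduct, neg_zero]

theorem dotProduct_mulVec_mulVec_of_mulVec_eq {M N : Matrix n n R} (hM : Mᵀ = M)
    (hMN : (M * N)ᵀ = M * N) {c : n → R} (hc : N *ᵥ c = c) (w : n → R) :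
    c ⬝ᵥ (M *ᵥ (N *ᵥ w)) = c ⬝ᵥ (M *ᵥ w) := by
  rw [mulVec_mulVec, dotProduct_mulVec_of_transpose_eq hMN, ← mulVec_mulVec, hc,
    ← dotProduct_mulVec_of_transpose_eq hM]

theorem dotProduct_mulVec_nonsing_inv_mulVec [DecidableEq n] {M N : Matrix n n R}
    (hM : Mᵀ = M) (hMN : (M * N)ᵀ = M * N) (hN : IsUnit N) {c : n → R} (hc : N *ᵥ c = c)
    (v : n → R) : c ⬝ᵥ (M *ᵥ (N⁻¹ *ᵥ v)) = c ⬝ᵥ (M *ᵥ v) := by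
  rw [← dotProduct_mulVec_mulVec_of_mulVec_eq hM hMN hc, mulVec_mulVec v N,
    mul_nonsing_inv _ ((isUnit_iff_isUnit_det N).mp hN), one_mulVec]

end Matrix

theorem HasDerivAt.dotProduct_mulVec {𝕜 k n : Type*} [NontriviallyNormedField 𝕜] [Fintype k]
    [Fintype n] {u : 𝕜 → n → 𝕜} {u' : n → 𝕜} {t : 𝕜} (hu : HasDerivAt u u' t) (c : k → 𝕜)
    (A : Matrix k n 𝕜) : HasDerivAt (fun s => c ⬝ᵥ (A *ᵥ u s)) (c ⬝ᵥ (A *ᵥ u')) t := by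
  simp only [Matrix.dotProduct_mulVec c A]
  simp only [dotProduct]
  exact HasDerivAt.fun_sum fun i _ => (hasDerivAt_pi.mp hu i).const_mul _

/-- The semidiscretization `∂ₜu = −(I − D2)⁻¹ D1 u` of the linear dispersive
equation `(1 − ∂ₓ²)∂ₜu + ∂ₓu = 0`, with consistent periodic SBP operators
`D1`, `D2` sharing a symmetric positive definite mass matrix `M`, conserves
the discrete total mass `𝟙ᵀ·M·u(t)`. -/
theorem linear_dispersive_conserves_total_mass
    (m : ℕ) (D1 D2 M A2 : Matrix (Fin m) (Fin m) ℝ)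
    (hM : M.PosDef)
    (hD1 : M * D1 + D1ᵀ * M = 0)
    (hD1cons : D1 *ᵥ (1 : Fin m → ℝ) = 0)
    (hA2 : A2.PosSemidef)
    (hD2 : M * D2 = -A2)
    (hD2cons : D2 *ᵥ (1 : Fin m → ℝ) = 0)
    (u : ℝ → Fin m → ℝ)
    (hu : ∀ t, HasDerivAt u (-((1 - D2)⁻¹ *ᵥ (D1 *ᵥ u t))) t) :
    ∀ t₁ t₂ : ℝ,
      (1 : Fin m → ℝ) ⬝ᵥ (M *ᵥ u t₁) = (1 : Fin m → ℝ) ⬝ᵥ (M *ᵥ u t₂) := by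
  have hMsymm : Mᵀ = M := hM.isHermitian.eq
  have hA2symm : A2ᵀ = A2 := hA2.isHermitian.eq
  have hMN : M * (1 - D2) = M + A2 := by rw [mul_sub, mul_one, hD2, sub_neg_eq_add]
  have hMNsymm : (M * (1 - D2))ᵀ = M * (1 - D2) := by
    rw [hMN, transpose_add, hMsymm, hA2symm]
  have hunit : IsUnit (1 - D2) :=
    isUnit_of_mul_isUnit_right (hMN ▸ (hM.add_posSemidef hA2).isUnit)
  have hfix : (1 - D2) *ᵥ (1 : Fin m → ℝ) = 1 := by
    rw [sub_mulVec, one_mulVec, hD2cons, sub_zero]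
  have hmass : ∀ t, HasDerivAt (fun s => (1 : Fin m → ℝ) ⬝ᵥ (M *ᵥ u s)) 0 t := fun t => by
    simpa only [mulVec_neg, dotProduct_neg,
      dotProduct_mulVec_nonsing_inv_mulVec hMsymm hMNsymm hunit hfix,
      dotProduct_mulVec_mulVec_eq_zero_of_skew hD1 hD1cons, neg_zero]
      using (hu t).dotProduct_mulVec 1 M
  exact is_const_of_deriv_eq_zero (fun t => (hmass t).differentiableAt) fun t => (hmass t).deriv
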